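/- arXiv:1207.3042 — 3 statements merged into one kernel-verified Lean document; each statement's English description precedes it below -/
import Mathlib

section
/- (Commutativity of hydrodynamic flows associated to an F-manifold with compatible flat connection.) Let U ⊆ ℝⁿ be open and let c^i_{jk} : U → ℝ be smooth functions that are symmetric in the lower indices (c^i_{jk} = c^i_{kj}), associative (Σ_m c^i_{jm} c^m_{kl} = Σ_m c^i_{km} c^m_{jl}), and satisfy ∂_l c^i_{jk} = ∂_j c^i_{lk} (flat coordinates of an F-manifold with compatible flat connection). Let X, Y : U → ℝⁿ be smooth vector fields satisfying Σ_m c^i_{jm} ∂_k X^m = Σ_m c^i_{km} ∂_j X^m and Σ_m c^i_{jm} ∂_k Y^m = Σ_m c^i_{km} ∂_j Y^m for all i, j, k. Then the evolutionary vector fields with components ξ^i = Σ_{j,k} c^i_{jk} X^k u^j_x and ζ^i = Σ_{j,k} c^i_{jk} Y^k u^j_x commute: their evolutionary Lie bracket [ξ,ζ]^p = Σ_{i,s} (∂_x^s ξ^i)(∂ζ^p/∂u^i_{(s)}) − (∂_x^s ζ^i)(∂ξ^p/∂u^i_{(s)}) vanishes identically. -/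
open Finset

/-- The partial derivative `∂F/∂u^k` of a smooth function of `u = (u¹,…,uⁿ)`. -/
noncomputable def pder {n : ℕ} (F : (Fin n → ℝ) → ℝ) (k : Fin n)
    (x : Fin n → ℝ) : ℝ :=
  fderiv ℝ F x (Pi.single k 1)

/-- The components `B^i_j = Σ_k c^i_{jk} X^k` of the quasilinear flow
`u^i_t = c^i_{jk} X^k u^j_x`. -/
noncomputable def hydroCoeff {n : ℕ}
    (c : Fin n → Fin n → Fin n → (Fin n → ℝ) → ℝ)
    (X : Fin n → (Fin n → ℝ) → ℝ) (i j : Fin n) : (Fin n → ℝ) → ℝ :=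
  fun x => ∑ k, c i j k x * X k x

/-- The `p`-th component of the evolutionary Lie bracket
`[ξ,ζ]^p = Σ_{i,s} (∂_x^s ξ^i)(∂ζ^p/∂u^i_{(s)}) − (∂_x^s ζ^i)(∂ξ^p/∂u^i_{(s)})`
of the two evolutionary vector fields `ξ^i = Σ c^i_{jk} X^k u^j_x` and
`ζ^i = Σ c^i_{jk} Y^k u^j_x`, written out explicitly as a function of the
point `u = x` and of the jet variables `u_x = w`, `u_{xx} = z` (the bracket
depends only on `u, u_x, u_{xx}`, so the flows commute precisely when this
expression vanishes identically). -/
noncomputable def evolutionaryBracket {n : ℕ}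
    (c : Fin n → Fin n → Fin n → (Fin n → ℝ) → ℝ)
    (X Y : Fin n → (Fin n → ℝ) → ℝ) (p : Fin n)
    (x w z : Fin n → ℝ) : ℝ :=
  (∑ i,
      ((∑ j, hydroCoeff c X i j x * w j) *
          (∑ m, pder (hydroCoeff c Y p m) i x * w m)
        + ((∑ m, ∑ j, pder (hydroCoeff c X i j) m x * w m * w j)
            + ∑ j, hydroCoeff c X i j x * z j) * hydroCoeff c Y p i x))
    - ∑ i,
        ((∑ j, hydroCoeff c Y i j x * w j) *
            (∑ m, pder (hydroCoeff c X p m) i x * w m)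
          + ((∑ m, ∑ j, pder (hydroCoeff c Y i j) m x * w m * w j)
              + ∑ j, hydroCoeff c Y i j x * z j) * hydroCoeff c X p i x)

/-! Write `B = (c^i_{jk} X^k)` and `A = (c^i_{jk} Y^k)`. The bracket is a quadratic form in
`u_x` plus a linear form in `u_{xx}`. The coefficient of `u_{xx}` is the commutator `[A, B]`,
which vanishes because multiplication operators of a commutative associative algebra commute.
Flatness of `c` together with the condition on `X` makes `∂_i B^p_m` symmetric in `i` and `m`
(and likewise for `A`); with this symmetry the coefficient of `u^m_x u^j_x` becomes
`∂_m [A, B]^p_j`, which vanishes because `[A, B] = 0` on the open set `U`. -/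

open Topology

theorem Finset.sum_sum_sum_comm {ι κ μ M : Type*} [AddCommMonoid M] {s : Finset ι}
    {t : Finset κ} {u : Finset μ} (f : ι → κ → μ → M) :
    ∑ i ∈ s, ∑ j ∈ t, ∑ k ∈ u, f i j k = ∑ j ∈ t, ∑ k ∈ u, ∑ i ∈ s, f i j k := by
  rw [sum_comm]
  exact sum_congr rfl fun _ _ => sum_comm

theorem sum_collect_jet_coeffs {ι R : Type*} [Fintype ι] [CommSemiring R] (a : ι → R)
    (b d : ι → ι → R) (e : ι → ι → ι → R) (w z : ι → R) :
    ∑ i, ((∑ j, b i j * w j) * (∑ m, d i m * w m)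
        + ((∑ m, ∑ j, e m i j * w m * w j) + ∑ j, b i j * z j) * a i)
      = ∑ m, ∑ j, (∑ i, (b i j * d i m + e m i j * a i)) * (w m * w j)
        + ∑ j, (∑ i, b i j * a i) * z j := by
  simp only [sum_add_distrib, sum_mul, mul_sum, add_mul]
  rw [sum_sum_sum_comm (fun i m j => b i j * w j * (d i m * w m)),
    sum_sum_sum_comm (fun i m j => e m i j * w m * w j * a i),
    sum_comm (f := fun i j => b i j * z j * a i), ← add_assoc]
  congr 1; congr 1
  all_goals ac_rfl

section
variable {n : ℕ}

theorem pder_sum_mul (f g : Fin n → (Fin n → ℝ) → ℝ) {x : Fin n → ℝ} (i : Fin n)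
    (hf : ∀ k, DifferentiableAt ℝ (f k) x) (hg : ∀ k, DifferentiableAt ℝ (g k) x) :
    pder (fun y => ∑ k, f k y * g k y) i x
      = ∑ k, (pder (f k) i x * g k x + f k x * pder (g k) i x) := by
  rw [pder, fderiv_fun_sum (A := fun k y => f k y * g k y) fun k _ => (hf k).mul (hg k),
    _root_.sum_apply]
  refine sum_congr rfl fun k _ => ?_
  rw [fderiv_fun_mul (hf k) (hg k)]
  simp only [pder, _root_.add_apply, _root_.smul_apply, smul_eq_mul]
  ring

theorem Filter.EventuallyEq.pder_eq {F G : (Fin n → ℝ) → ℝ} {x : Fin n → ℝ}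
    (h : F =ᶠ[𝓝 x] G) (k : Fin n) : pder F k x = pder G k x := by
  rw [pder, pder, h.fderiv_eq]

variable {c : Fin n → Fin n → Fin n → (Fin n → ℝ) → ℝ} {X Y : Fin n → (Fin n → ℝ) → ℝ}

theorem differentiableAt_hydroCoeff {x : Fin n → ℝ}
    (hc : ∀ i j k, DifferentiableAt ℝ (c i j k) x) (hX : ∀ k, DifferentiableAt ℝ (X k) x)
    (i j : Fin n) : DifferentiableAt ℝ (hydroCoeff c X i j) x :=
  DifferentiableAt.fun_sum fun k _ => (hc i j k).mul (hX k)

theorem pder_hydroCoeff_comm {x : Fin n → ℝ}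
    (hc : ∀ i j k, DifferentiableAt ℝ (c i j k) x) (hXd : ∀ k, DifferentiableAt ℝ (X k) x)
    (hflat : ∀ i j k l, pder (c i j k) l x = pder (c i l k) j x)
    (hX : ∀ i j k, ∑ m, c i j m x * pder (X m) k x = ∑ m, c i k m x * pder (X m) j x)
    (p i m : Fin n) :
    pder (hydroCoeff c X p m) i x = pder (hydroCoeff c X p i) m x := by
  unfold hydroCoeff
  rw [pder_sum_mul _ _ i (hc p m) hXd, pder_sum_mul _ _ m (hc p i) hXd]
  simp only [sum_add_distrib, hflat p m _ i, hX p m i]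

theorem hydroCoeff_mul_comm {y : Fin n → ℝ} (hsymm : ∀ i j k, c i j k y = c i k j y)
    (hassoc : ∀ i j k l, ∑ m, c i j m y * c m k l y = ∑ m, c i k m y * c m j l y)
    (p j : Fin n) :
    ∑ i, hydroCoeff c X p i y * hydroCoeff c Y i j y
      = ∑ i, hydroCoeff c Y p i y * hydroCoeff c X i j y := by
  have hcoeff : ∀ k l, ∑ i, c p i k y * c i j l y = ∑ i, c p i l y * c i j k y := by
    intro k l
    calc ∑ i, c p i k y * c i j l y = ∑ i, c p k i y * c i j l y := by simp only [hsymm p _ k]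
      _ = ∑ i, c p j i y * c i k l y := hassoc p k j l
      _ = ∑ i, c p j i y * c i l k y := by simp only [hsymm _ k l]
      _ = ∑ i, c p l i y * c i j k y := hassoc p j l k
      _ = ∑ i, c p i l y * c i j k y := by simp only [hsymm p l]
  simp only [hydroCoeff]
  calc ∑ i, (∑ k, c p i k y * X k y) * (∑ l, c i j l y * Y l y)
      = ∑ k, ∑ l, (∑ i, c p i k y * c i j l y) * (X k y * Y l y) := by
        simp only [sum_mul, mul_sum]
        conv_lhs => rw [sum_sum_sum_comm, sum_comm]
        ac_rfl
    _ = ∑ k, ∑ l, (∑ i, c p i l y * c i j k y) * (X k y * Y l y) := by simp only [hcoeff]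
    _ = ∑ i, (∑ l, c p i l y * Y l y) * (∑ k, c i j k y * X k y) := by
        simp only [sum_mul, mul_sum]
        conv_rhs => rw [sum_sum_sum_comm]
        ac_rfl

theorem evolutionaryBracket_eq_zero_of_commute {x : Fin n → ℝ}
    (hXd : ∀ i j, DifferentiableAt ℝ (hydroCoeff c X i j) x)
    (hYd : ∀ i j, DifferentiableAt ℝ (hydroCoeff c Y i j) x)
    (hcomm : ∀ᶠ y in 𝓝 x, ∀ p j, ∑ i, hydroCoeff c X p i y * hydroCoeff c Y i j y
      = ∑ i, hydroCoeff c Y p i y * hydroCoeff c X i j y)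
    (hXsymm : ∀ p i m, pder (hydroCoeff c X p m) i x = pder (hydroCoeff c X p i) m x)
    (hYsymm : ∀ p i m, pder (hydroCoeff c Y p m) i x = pder (hydroCoeff c Y p i) m x)
    (p : Fin n) (w z : Fin n → ℝ) :
    evolutionaryBracket c X Y p x w z = 0 := by
  have hcomm_deriv : ∀ m j,
      ∑ i, (pder (hydroCoeff c X p i) m x * hydroCoeff c Y i j x
          + hydroCoeff c X p i x * pder (hydroCoeff c Y i j) m x)
        = ∑ i, (pder (hydroCoeff c Y p i) m x * hydroCoeff c X i j x
          + hydroCoeff c Y p i x * pder (hydroCoeff c X i j) m x) := by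
    intro m j
    rw [← pder_sum_mul _ _ m (hXd p) (hYd · j), ← pder_sum_mul _ _ m (hYd p) (hXd · j)]
    exact Filter.EventuallyEq.pder_eq (hcomm.mono fun y hy => hy p j) m
  rw [evolutionaryBracket, sub_eq_zero, sum_collect_jet_coeffs, sum_collect_jet_coeffs]
  congr 1
  · refine sum_congr rfl fun m _ => sum_congr rfl fun j _ => ?_
    simp only [hXsymm p _ m, hYsymm p _ m]
    congr 1
    convert (hcomm_deriv m j).symm using 2 with i <;> ring
  · refine sum_congr rfl fun j _ => ?_
    congr 1
    convert (hcomm.self_of_nhds p j).symm using 2 with i <;> ring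

end

theorem hydrodynamic_flows_commute_general {n : ℕ}
    (U : Set (Fin n → ℝ)) (hU : IsOpen U)
    (c : Fin n → Fin n → Fin n → (Fin n → ℝ) → ℝ)
    (hc_smooth : ∀ i j k, ContDiffOn ℝ (⊤ : ℕ∞) (c i j k) U)
    (hc_symm : ∀ i j k, ∀ x ∈ U, c i j k x = c i k j x)
    (hc_assoc : ∀ i j k l, ∀ x ∈ U,
      ∑ m, c i j m x * c m k l x = ∑ m, c i k m x * c m j l x)
    (hc_flat : ∀ i j k l, ∀ x ∈ U,
      pder (c i j k) l x = pder (c i l k) j x)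
    (X Y : Fin n → (Fin n → ℝ) → ℝ)
    (hX_smooth : ∀ i, ContDiffOn ℝ (⊤ : ℕ∞) (X i) U)
    (hY_smooth : ∀ i, ContDiffOn ℝ (⊤ : ℕ∞) (Y i) U)
    (hX : ∀ i j k, ∀ x ∈ U,
      ∑ m, c i j m x * pder (X m) k x = ∑ m, c i k m x * pder (X m) j x)
    (hY : ∀ i j k, ∀ x ∈ U,
      ∑ m, c i j m x * pder (Y m) k x = ∑ m, c i k m x * pder (Y m) j x) :
    ∀ p : Fin n, ∀ x ∈ U, ∀ w z : Fin n → ℝ,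
      evolutionaryBracket c X Y p x w z = 0 := by
  intro p x hx w z
  have hU_nhds : U ∈ 𝓝 x := hU.mem_nhds hx
  have hdiff {F : (Fin n → ℝ) → ℝ} (hF : ContDiffOn ℝ (⊤ : ℕ∞) F U) :
      DifferentiableAt ℝ F x :=
    (hF.differentiableOn (by norm_num)).differentiableAt hU_nhds
  have hc (i j k : Fin n) := hdiff (hc_smooth i j k)
  have hXd (k : Fin n) := hdiff (hX_smooth k)
  have hYd (k : Fin n) := hdiff (hY_smooth k)
  refine evolutionaryBracket_eq_zero_of_commute
    (differentiableAt_hydroCoeff hc hXd) (differentiableAt_hydroCoeff hc hYd) ?_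
    (pder_hydroCoeff_comm hc hXd (hc_flat · · · · x hx) (hX · · · x hx))
    (pder_hydroCoeff_comm hc hYd (hc_flat · · · · x hx) (hY · · · x hx)) p w z
  filter_upwards [hU_nhds] with y hy
  exact hydroCoeff_mul_comm (hc_symm · · · y hy) (hc_assoc · · · · y hy)

/-- **commutativity of hydrodynamic flows associated to an
F-manifold with compatible flat connection.** Let `U ⊆ ℝⁿ` be open and let
`c^i_{jk} : U → ℝ` be smooth, symmetric in the lower indices, associative and
satisfying `∂_l c^i_{jk} = ∂_j c^i_{lk}`. Let `X, Y : U → ℝⁿ` be smooth vector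
fields satisfying `Σ_m c^i_{jm} ∂_k X^m = Σ_m c^i_{km} ∂_j X^m` (and the same
for `Y`). Then the evolutionary vector fields with components
`ξ^i = Σ c^i_{jk} X^k u^j_x` and `ζ^i = Σ c^i_{jk} Y^k u^j_x` commute: their
evolutionary Lie bracket vanishes identically. -/
theorem hydrodynamic_flows_commute {n : ℕ} (hn : 1 ≤ n)
    (U : Set (Fin n → ℝ)) (hU : IsOpen U)
    (c : Fin n → Fin n → Fin n → (Fin n → ℝ) → ℝ)
    (hc_smooth : ∀ i j k, ContDiffOn ℝ (⊤ : ℕ∞) (c i j k) U)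
    (hc_symm : ∀ i j k, ∀ x ∈ U, c i j k x = c i k j x)
    (hc_assoc : ∀ i j k l, ∀ x ∈ U,
      ∑ m, c i j m x * c m k l x = ∑ m, c i k m x * c m j l x)
    (hc_flat : ∀ i j k l, ∀ x ∈ U,
      pder (c i j k) l x = pder (c i l k) j x)
    (X Y : Fin n → (Fin n → ℝ) → ℝ)
    (hX_smooth : ∀ i, ContDiffOn ℝ (⊤ : ℕ∞) (X i) U)
    (hY_smooth : ∀ i, ContDiffOn ℝ (⊤ : ℕ∞) (Y i) U)
    (hX : ∀ i j k, ∀ x ∈ U,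
      ∑ m, c i j m x * pder (X m) k x = ∑ m, c i k m x * pder (X m) j x)
    (hY : ∀ i j k, ∀ x ∈ U,
      ∑ m, c i j m x * pder (Y m) k x = ∑ m, c i k m x * pder (Y m) j x) :
    ∀ p : Fin n, ∀ x ∈ U, ∀ w z : Fin n → ℝ,
      evolutionaryBracket c X Y p x w z = 0 :=
  hydrodynamic_flows_commute_general U hU c hc_smooth hc_symm hc_assoc hc_flat X Y hX_smooth
    hY_smooth hX hY
end

section
/- (Closedness of the hierarchy 1-forms for an invariant metric.) Under the hypotheses of the recursion lemma — c^i_{jk} smooth and symmetric in the lower indices, g constant symmetric nondegenerate and invariant (Σ_k c^i_{jk} g^{kl} = Σ_k c^l_{jk} g^{ki}), X, X̃ smooth with ∂_j X^i = Σ_k c^i_{jk} X̃^k, and ω_i := Σ_k g_{ki} X^k — the 1-form ω is closed: ∂_j ω_i − ∂_i ω_j = 0 for all i, j. -/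
/-! By the recursion, `∂_j ω_i = Σ_{k,m} g_{ki} c^k_{jm} X̃^m`, so it suffices that the lowered
structure constants `g_{ik} c^k_{jm}` are symmetric in `i, j`. Using `c^k_{jm} = c^k_{mj}` this is
the symmetry of the matrix `G C_m`, where `(C_m)_{kj} = c^k_{mj}`; invariance says `C_m G⁻¹` is
symmetric, hence so is `G C_m = G (C_m G⁻¹) G`. -/

open Finset

theorem Matrix.IsSymm.mul_of_isSymm_mul_inv {ι R : Type*} [Fintype ι] [DecidableEq ι]
    [CommRing R] {G Ginv A : Matrix ι ι R} (hG : G.IsSymm) (hinv : G * Ginv = 1)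
    (hA : (A * Ginv).IsSymm) : (G * A).IsSymm := by
  have hGA : G * A = G * (A * Ginv) * G := by
    rw [Matrix.mul_assoc, Matrix.mul_assoc, mul_eq_one_comm.mp hinv, Matrix.mul_one]
  rw [hGA, Matrix.IsSymm, Matrix.transpose_mul, Matrix.transpose_mul, hG.eq, hA.eq]
  exact (Matrix.mul_assoc _ _ _).symm

theorem pder_fun_sum_const_mul {n : ℕ} (a : Fin n → ℝ) (X : Fin n → (Fin n → ℝ) → ℝ)
    (j : Fin n) {x : Fin n → ℝ} (hX : ∀ k, DifferentiableAt ℝ (X k) x) :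
    pder (fun y => ∑ k, a k * X k y) j x = ∑ k, a k * pder (X k) j x := by
  have hsum : HasFDerivAt (fun y => ∑ k, a k * X k y) (∑ k, a k • fderiv ℝ (X k) x) x :=
    HasFDerivAt.fun_sum fun k _ => (hX k).hasFDerivAt.const_mul (a k)
  simp [pder, hsum.fderiv]

theorem hierarchy_one_forms_closed_general {n : ℕ} (U : Set (Fin n → ℝ)) (hU : IsOpen U)
    (c : Fin n → Fin n → Fin n → (Fin n → ℝ) → ℝ)
    (hc_symm : ∀ i j k, ∀ x ∈ U, c i j k x = c i k j x)
    (g ginv : Fin n → Fin n → ℝ)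
    (hg_symm : ∀ i j, g i j = g j i)
    (hg_inv : ∀ i j, ∑ k, g i k * ginv k j = if i = j then (1 : ℝ) else 0)
    (hg_invariant : ∀ i j l, ∀ x ∈ U,
      ∑ k, c i j k x * ginv k l = ∑ k, c l j k x * ginv k i)
    (X Xt : Fin n → (Fin n → ℝ) → ℝ)
    (hX_smooth : ∀ i, ContDiffOn ℝ (⊤ : ℕ∞) (X i) U)
    (hrec : ∀ i j, ∀ x ∈ U, pder (X i) j x = ∑ k, c i j k x * Xt k x) :
    ∀ i j, ∀ x ∈ U,
      pder (fun y => ∑ k, g k i * X k y) j x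
        - pder (fun y => ∑ k, g k j * X k y) i x = 0 := by
  intro i j x hx
  have hdX : ∀ k, DifferentiableAt ℝ (X k) x := fun k =>
    ((hX_smooth k).contDiffAt (hU.mem_nhds hx)).differentiableAt (by simp)
  let G : Matrix (Fin n) (Fin n) ℝ := Matrix.of g
  let C : Fin n → Matrix (Fin n) (Fin n) ℝ := fun m => Matrix.of fun k l => c k m l x
  have hlowered_symm : ∀ m, (G * C m).IsSymm := fun m =>
    Matrix.IsSymm.mul_of_isSymm_mul_inv (Ginv := Matrix.of ginv)
      (Matrix.IsSymm.ext fun i j => hg_symm j i)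
      (by ext i j; simpa [G, Matrix.mul_apply, Matrix.one_apply] using hg_inv i j)
      (Matrix.IsSymm.ext fun i l => by
        simpa [C, Matrix.mul_apply] using (hg_invariant i m l x hx).symm)
  have hdω : ∀ i j, pder (fun y => ∑ k, g k i * X k y) j x = ∑ m, (G * C m) i j * Xt m x := by
    intro i j
    simp only [pder_fun_sum_const_mul _ _ _ hdX, hrec _ j x hx, mul_sum, G, C, Matrix.mul_apply,
      Matrix.of_apply, sum_mul, hg_symm _ i, hc_symm _ j _ x hx]
    exact sum_comm.trans (sum_congr rfl fun _ _ => sum_congr rfl fun _ _ => by ring)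
  rw [hdω, hdω, sub_eq_zero]
  exact sum_congr rfl fun m _ => by rw [(hlowered_symm m).apply]

/-- **closedness of the hierarchy 1-forms for an invariant
metric.** Under the hypotheses of the recursion lemma — `c^i_{jk}` smooth and
symmetric in the lower indices, `g` constant symmetric nondegenerate and
invariant (`Σ_k c^i_{jk} g^{kl} = Σ_k c^l_{jk} g^{ki}`), `X, X̃` smooth with
`∂_j X^i = Σ_k c^i_{jk} X̃^k`, and `ω_i := Σ_k g_{ki} X^k` — the 1-form `ω`
is closed: `∂_j ω_i − ∂_i ω_j = 0` for all `i, j`. -/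
theorem hierarchy_one_forms_closed {n : ℕ} (hn : 1 ≤ n)
    (U : Set (Fin n → ℝ)) (hU : IsOpen U)
    (c : Fin n → Fin n → Fin n → (Fin n → ℝ) → ℝ)
    (hc_smooth : ∀ i j k, ContDiffOn ℝ (⊤ : ℕ∞) (c i j k) U)
    (hc_symm : ∀ i j k, ∀ x ∈ U, c i j k x = c i k j x)
    (g ginv : Fin n → Fin n → ℝ)
    (hg_symm : ∀ i j, g i j = g j i)
    (hg_inv : ∀ i j, ∑ k, g i k * ginv k j = if i = j then (1 : ℝ) else 0)
    (hg_invariant : ∀ i j l, ∀ x ∈ U,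
      ∑ k, c i j k x * ginv k l = ∑ k, c l j k x * ginv k i)
    (X Xt : Fin n → (Fin n → ℝ) → ℝ)
    (hX_smooth : ∀ i, ContDiffOn ℝ (⊤ : ℕ∞) (X i) U)
    (hXt_smooth : ∀ i, ContDiffOn ℝ (⊤ : ℕ∞) (Xt i) U)
    (hrec : ∀ i j, ∀ x ∈ U, pder (X i) j x = ∑ k, c i j k x * Xt k x) :
    ∀ i j, ∀ x ∈ U,
      pder (fun y => ∑ k, g k i * X k y) j x
        - pder (fun y => ∑ k, g k j * X k y) i x = 0 :=
  hierarchy_one_forms_closed_general U hU c hc_symm g ginv hg_symm hg_inv hg_invariant X Xt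
    hX_smooth hrec
end

section
/- (Involutivity of the 1-forms of the principal hierarchy.) Let U ⊆ ℝⁿ be open, let η = (η^{il}) be a constant symmetric nondegenerate matrix, and let c^i_{jk} : U → ℝ be smooth and associative: Σ_i c^i_{kn} c^m_{ih} = Σ_i c^i_{kh} c^m_{in} for all k, n, m, h. Suppose the smooth covector fields ω, ω̃, σ, σ̃ : U → ℝⁿ satisfy the recursions Σ_l η^{il} ∂_j ω_l = Σ_{k,l} c^i_{jk} η^{kl} ω̃_l and Σ_l η^{il} ∂_j σ_l = Σ_{k,l} c^i_{jk} η^{kl} σ̃_l for all i, j. Then for all j and k, Σ_{i,l} η^{il} ( (∂_k σ_l)(∂_i ω_j) − (∂_k ω_l)(∂_i σ_j) ) = 0; consequently the Poisson bracket of the 1-forms ω and σ, whose j-th component in flat coordinates is Σ_{i,k,l} η^{il}( (∂_k σ_l)(∂_i ω_j) − (∂_k ω_l)(∂_i σ_j) ) u^k_x, vanishes identically. Thus the 1-forms defining the principal hierarchy are in involution, and the involutivity is a consequence of the associativity of the product. -/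
open Finset

/-- **involutivity of the 1-forms of the principal hierarchy.**
Let `U ⊆ ℝⁿ` be open, `η = (η^{il})` a constant symmetric nondegenerate
matrix, and `c^i_{jk} : U → ℝ` smooth and associative
(`Σ_i c^i_{kn} c^m_{ih} = Σ_i c^i_{kh} c^m_{in}`). Suppose the smooth covector
fields `ω, ω̃, σ, σ̃ : U → ℝⁿ` satisfy the recursions
`Σ_l η^{il} ∂_j ω_l = Σ_{k,l} c^i_{jk} η^{kl} ω̃_l` and
`Σ_l η^{il} ∂_j σ_l = Σ_{k,l} c^i_{jk} η^{kl} σ̃_l`. Then for all `j, k`,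
`Σ_{i,l} η^{il}((∂_k σ_l)(∂_i ω_j) − (∂_k ω_l)(∂_i σ_j)) = 0`; consequently
the Poisson bracket of the 1-forms `ω` and `σ`, whose `j`-th component is
`Σ_{i,k,l} η^{il}((∂_k σ_l)(∂_i ω_j) − (∂_k ω_l)(∂_i σ_j)) u^k_x`, vanishes
identically. Thus the 1-forms defining the principal hierarchy are in
involution, as a consequence of the associativity of the product. -/
theorem principal_hierarchy_involutivity {n : ℕ} (hn : 1 ≤ n)
    (U : Set (Fin n → ℝ)) (hU : IsOpen U)
    (η ηinv : Fin n → Fin n → ℝ)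
    (hη_symm : ∀ i l, η i l = η l i)
    (hη_inv : ∀ i j, ∑ k, η i k * ηinv k j = if i = j then (1 : ℝ) else 0)
    (c : Fin n → Fin n → Fin n → (Fin n → ℝ) → ℝ)
    (hc_smooth : ∀ i j k, ContDiffOn ℝ (⊤ : ℕ∞) (c i j k) U)
    (hc_assoc : ∀ k nn m h, ∀ x ∈ U,
      ∑ i, c i k nn x * c m i h x = ∑ i, c i k h x * c m i nn x)
    (ω ωt σ σt : Fin n → (Fin n → ℝ) → ℝ)
    (hω_smooth : ∀ i, ContDiffOn ℝ (⊤ : ℕ∞) (ω i) U)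
    (hσ_smooth : ∀ i, ContDiffOn ℝ (⊤ : ℕ∞) (σ i) U)
    (hrec_ω : ∀ i j, ∀ x ∈ U,
      ∑ l, η i l * pder (ω l) j x = ∑ k, ∑ l, c i j k x * η k l * ωt l x)
    (hrec_σ : ∀ i j, ∀ x ∈ U,
      ∑ l, η i l * pder (σ l) j x = ∑ k, ∑ l, c i j k x * η k l * σt l x) :
    (∀ j k, ∀ x ∈ U,
        ∑ i, ∑ l, η i l *
          (pder (σ l) k x * pder (ω j) i x - pder (ω l) k x * pder (σ j) i x)
          = 0) ∧
      ∀ j, ∀ x ∈ U, ∀ w : Fin n → ℝ,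
        ∑ k, (∑ i, ∑ l, η i l *
          (pder (σ l) k x * pder (ω j) i x - pder (ω l) k x * pder (σ j) i x))
            * w k = 0 := by
  -- η⁻¹ is also a left inverse
  have hinv' : ∀ a b : Fin n, ∑ m, ηinv a m * η m b = if a = b then (1:ℝ) else 0 := by
    have h1 : (Matrix.of η) * (Matrix.of ηinv) = 1 := by
      ext i j
      simpa [Matrix.mul_apply, Matrix.one_apply] using hη_inv i j
    have h2 : (Matrix.of ηinv) * (Matrix.of η) = 1 := mul_eq_one_comm.mp h1
    intro a b
    have := congrFun (congrFun h2 a) b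
    simpa [Matrix.mul_apply, Matrix.one_apply] using this
  have main : ∀ j k, ∀ x ∈ U,
      ∑ i, ∑ l, η i l *
        (pder (σ l) k x * pder (ω j) i x - pder (ω l) k x * pder (σ j) i x) = 0 := by
    intro j k x hx
    set Sa : Fin n → ℝ := fun q => ∑ r, η q r * ωt r x with hSa
    set Sb : Fin n → ℝ := fun q => ∑ r, η q r * σt r x with hSb
    have hexp : ∀ (m i : Fin n) (f S : Fin n → ℝ), (∀ q, S q = ∑ r, η q r * f r) →
        ∑ p, ∑ l, c m i p x * η p l * f l = ∑ p, c m i p x * S p := by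
      intro m i f S hS
      refine Finset.sum_congr rfl fun p _ => ?_
      rw [hS, Finset.mul_sum]
      exact Finset.sum_congr rfl fun l _ => (mul_assoc _ _ _)
    have hDω : ∀ i, pder (ω j) i x = ∑ m, ηinv j m * ∑ q, c m i q x * Sa q := by
      intro i
      calc pder (ω j) i x
          = ∑ l, (∑ m, ηinv j m * η m l) * pder (ω l) i x := by
            simp [hinv', ite_mul]
        _ = ∑ m, ηinv j m * ∑ l, η m l * pder (ω l) i x := by
            simp only [Finset.sum_mul]
            rw [Finset.sum_comm]
            refine Finset.sum_congr rfl fun m _ => ?_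
            rw [Finset.mul_sum]
            exact Finset.sum_congr rfl fun l _ => by ring
        _ = ∑ m, ηinv j m * ∑ q, c m i q x * Sa q := by
            refine Finset.sum_congr rfl fun m _ => ?_
            rw [hrec_ω m i x hx, hexp m i (fun r => ωt r x) Sa (fun q => rfl)]
    have hDσ : ∀ i, pder (σ j) i x = ∑ m, ηinv j m * ∑ q, c m i q x * Sb q := by
      intro i
      calc pder (σ j) i x
          = ∑ l, (∑ m, ηinv j m * η m l) * pder (σ l) i x := by
            simp [hinv', ite_mul]
        _ = ∑ m, ηinv j m * ∑ l, η m l * pder (σ l) i x := by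
            simp only [Finset.sum_mul]
            rw [Finset.sum_comm]
            refine Finset.sum_congr rfl fun m _ => ?_
            rw [Finset.mul_sum]
            exact Finset.sum_congr rfl fun l _ => by ring
        _ = ∑ m, ηinv j m * ∑ q, c m i q x * Sb q := by
            refine Finset.sum_congr rfl fun m _ => ?_
            rw [hrec_σ m i x hx, hexp m i (fun r => σt r x) Sb (fun q => rfl)]
    have hPσ : ∀ i, ∑ l, η i l * pder (σ l) k x = ∑ p, c i k p x * Sb p := by
      intro i
      rw [hrec_σ i k x hx]
      exact hexp i k (fun r => σt r x) Sb (fun q => rfl)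
    have hPω : ∀ i, ∑ l, η i l * pder (ω l) k x = ∑ p, c i k p x * Sa p := by
      intro i
      rw [hrec_ω i k x hx]
      exact hexp i k (fun r => ωt r x) Sa (fun q => rfl)
    have split : ∀ i, ∑ l, η i l *
        (pder (σ l) k x * pder (ω j) i x - pder (ω l) k x * pder (σ j) i x)
        = (∑ l, η i l * pder (σ l) k x) * pder (ω j) i x
          - (∑ l, η i l * pder (ω l) k x) * pder (σ j) i x := by
      intro i
      rw [Finset.sum_mul, Finset.sum_mul, ← Finset.sum_sub_distrib]
      exact Finset.sum_congr rfl fun l _ => by ring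
    have subst : ∀ i, ∑ l, η i l *
        (pder (σ l) k x * pder (ω j) i x - pder (ω l) k x * pder (σ j) i x)
        = (∑ p, c i k p x * Sb p) * (∑ m, ηinv j m * ∑ q, c m i q x * Sa q)
          - (∑ p, c i k p x * Sa p) * (∑ m, ηinv j m * ∑ q, c m i q x * Sb q) := by
      intro i
      rw [split i, hPσ i, hPω i, hDω i, hDσ i]
    rw [Finset.sum_congr rfl fun i _ => subst i, Finset.sum_sub_distrib]
    have hT : ∀ f g : Fin n → ℝ,
        ∑ i, (∑ p, c i k p x * f p) * (∑ m, ηinv j m * ∑ q, c m i q x * g q)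
          = ∑ m, ηinv j m * ∑ p, ∑ q, f p * g q * ∑ i, c i k p x * c m i q x := by
      intro f g
      calc ∑ i, (∑ p, c i k p x * f p) * (∑ m, ηinv j m * ∑ q, c m i q x * g q)
          = ∑ i, ∑ m, (∑ p, c i k p x * f p) * (ηinv j m * ∑ q, c m i q x * g q) :=
            Finset.sum_congr rfl fun i _ => Finset.mul_sum _ _ _
        _ = ∑ m, ∑ i, (∑ p, c i k p x * f p) * (ηinv j m * ∑ q, c m i q x * g q) :=
            Finset.sum_comm
        _ = ∑ m, ηinv j m * ∑ i, (∑ p, c i k p x * f p) * (∑ q, c m i q x * g q) := by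
            refine Finset.sum_congr rfl fun m _ => ?_
            rw [Finset.mul_sum]
            exact Finset.sum_congr rfl fun i _ => by ring
        _ = ∑ m, ηinv j m * ∑ p, ∑ q, f p * g q * ∑ i, c i k p x * c m i q x := by
            refine Finset.sum_congr rfl fun m _ => ?_
            congr 1
            calc ∑ i, (∑ p, c i k p x * f p) * (∑ q, c m i q x * g q)
                = ∑ i, ∑ p, ∑ q, (c i k p x * f p) * (c m i q x * g q) := by
                  refine Finset.sum_congr rfl fun i _ => ?_
                  rw [Finset.sum_mul]
                  exact Finset.sum_congr rfl fun p _ => Finset.mul_sum _ _ _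
              _ = ∑ p, ∑ i, ∑ q, (c i k p x * f p) * (c m i q x * g q) :=
                  Finset.sum_comm
              _ = ∑ p, ∑ q, ∑ i, (c i k p x * f p) * (c m i q x * g q) :=
                  Finset.sum_congr rfl fun p _ => Finset.sum_comm
              _ = ∑ p, ∑ q, f p * g q * ∑ i, c i k p x * c m i q x := by
                  refine Finset.sum_congr rfl fun p _ => Finset.sum_congr rfl fun q _ => ?_
                  rw [Finset.mul_sum]
                  exact Finset.sum_congr rfl fun i _ => by ring
    rw [hT Sb Sa, hT Sa Sb, sub_eq_zero]
    refine Finset.sum_congr rfl fun m _ => ?_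
    congr 1
    calc ∑ p, ∑ q, Sb p * Sa q * ∑ i, c i k p x * c m i q x
        = ∑ q, ∑ p, Sb p * Sa q * ∑ i, c i k p x * c m i q x := Finset.sum_comm
      _ = ∑ p, ∑ q, Sa p * Sb q * ∑ i, c i k p x * c m i q x := by
          refine Finset.sum_congr rfl fun a _ => Finset.sum_congr rfl fun b _ => ?_
          rw [hc_assoc k b m a x hx]
          ring
  refine ⟨main, fun j x hx w => ?_⟩
  refine Finset.sum_eq_zero fun k _ => ?_
  rw [main j k x hx, zero_mul]
end
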